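/- Consider the characteristic polynomial of the 2-step non-equidistant scheme, P_β^2(λ) = −(5/4)λ⁴ + (4/3)λ³ − 1/12. Then P_β^2(1) = 0, λ = 1 is a simple root, and every complex root λ ≠ 1 of P_β^2 satisfies |λ| < 1/2. In particular the roots of P_β^2 satisfy the root conditions: every root has modulus at most 1 and every root of modulus 1 is simple. -/

import Mathlib

/-! `P_β^2 = -(1/12) (X - 1) (15 X³ - X² - X - 1)`, and a root `z` of the cubic factor with
`‖z‖ ≥ 1/2` would satisfy `15 ‖z‖³ = ‖z² + z + 1‖ ≤ ‖z‖² + ‖z‖ + 1`, which already fails at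
`‖z‖ = 1/2` and only gets worse for larger `‖z‖`. So `1` is a simple root and all other roots
lie in the disc of radius `1/2`. -/

open Polynomial

/-- The characteristic polynomial of the 2-step non-equidistant scheme:
`P_β^2(λ) = −(5/4)λ⁴ + (4/3)λ³ − 1/12`. -/
noncomputable def charPolyBeta2 : Polynomial ℂ :=
  C (-(5 / 4) : ℂ) * X ^ 4 + C (4 / 3 : ℂ) * X ^ 3 + C (-(1 / 12) : ℂ)

noncomputable def charPolyBeta2Cofactor : ℂ[X] :=
  C (-(1 / 12) : ℂ) * (C 15 * X ^ 3 - X ^ 2 - X - 1)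

lemma charPolyBeta2_eq_cofactor_mul :
    charPolyBeta2 = charPolyBeta2Cofactor * (X - C 1) := by
  refine Polynomial.funext fun z => ?_
  simp [charPolyBeta2, charPolyBeta2Cofactor]
  ring

lemma eval_charPolyBeta2Cofactor (z : ℂ) :
    charPolyBeta2Cofactor.eval z = -(1 / 12) * (15 * z ^ 3 - z ^ 2 - z - 1) := by
  simp [charPolyBeta2Cofactor]

lemma norm_lt_half_of_fifteen_mul_cube_eq {z : ℂ} (hz : 15 * z ^ 3 = z ^ 2 + z + 1) :
    ‖z‖ < 1 / 2 := by
  by_contra! hle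
  have hcube : 15 * ‖z‖ ^ 3 ≤ ‖z‖ ^ 2 + ‖z‖ + 1 :=
    calc 15 * ‖z‖ ^ 3 = ‖z ^ 2 + z + 1‖ := by rw [← hz, norm_mul, norm_pow]; norm_num
      _ ≤ ‖z ^ 2‖ + ‖z‖ + ‖(1 : ℂ)‖ := norm_add₃_le
      _ = ‖z‖ ^ 2 + ‖z‖ + 1 := by rw [norm_pow, norm_one]
  nlinarith [sq_nonneg ‖z‖]

lemma norm_lt_half_of_isRoot_charPolyBeta2Cofactor {z : ℂ}
    (hz : charPolyBeta2Cofactor.eval z = 0) : ‖z‖ < 1 / 2 := by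
  rw [eval_charPolyBeta2Cofactor] at hz
  exact norm_lt_half_of_fifteen_mul_cube_eq (by linear_combination -12 * hz)

lemma charPolyBeta2_eval_one : charPolyBeta2.eval 1 = 0 := by
  simp [charPolyBeta2_eq_cofactor_mul]

lemma charPolyBeta2_rootMultiplicity_one : charPolyBeta2.rootMultiplicity 1 = 1 := by
  have hcofactor_one : charPolyBeta2Cofactor.eval 1 ≠ 0 := by
    rw [eval_charPolyBeta2Cofactor]; norm_num
  rw [charPolyBeta2_eq_cofactor_mul, ← pow_one (X - C 1),
    rootMultiplicity_mul_X_sub_C_pow (fun h => hcofactor_one (by rw [h, eval_zero])),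
    rootMultiplicity_eq_zero hcofactor_one]

lemma norm_lt_half_of_isRoot_charPolyBeta2 {z : ℂ} (hz : charPolyBeta2.eval z = 0)
    (hz1 : z ≠ 1) : ‖z‖ < 1 / 2 := by
  rw [charPolyBeta2_eq_cofactor_mul, eval_mul, mul_eq_zero] at hz
  refine norm_lt_half_of_isRoot_charPolyBeta2Cofactor (hz.resolve_right fun h => hz1 ?_)
  simpa [sub_eq_zero] using h

theorem charPolyBeta2_root_conditions :
    charPolyBeta2.eval 1 = 0 ∧
    charPolyBeta2.rootMultiplicity 1 = 1 ∧
    (∀ z : ℂ, charPolyBeta2.eval z = 0 → z ≠ 1 → ‖z‖ < 1 / 2) ∧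
    (∀ z : ℂ, charPolyBeta2.eval z = 0 →
      ‖z‖ ≤ 1 ∧ (‖z‖ = 1 → charPolyBeta2.rootMultiplicity z = 1)) := by
  refine ⟨charPolyBeta2_eval_one, charPolyBeta2_rootMultiplicity_one,
    fun z hz hz1 => norm_lt_half_of_isRoot_charPolyBeta2 hz hz1, fun z hz => ?_⟩
  obtain rfl | hz1 := eq_or_ne z 1
  · exact ⟨norm_one.le, fun _ => charPolyBeta2_rootMultiplicity_one⟩
  · have hsmall := norm_lt_half_of_isRoot_charPolyBeta2 hz hz1
    exact ⟨by linarith, fun h => by linarith⟩
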